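/- Let X ⊆ ℙ^d be a smooth complex projective variety of even dimension 2n with universal hyperplane family π : 𝔛 → ℙ^d. Then the perverse filtration satisfies H^{2n}_{≤1}(𝔛) = H^{2n}(𝔛), and for every point p ∈ ℙ^d the induced filtration on the stalk satisfies H^{2n}_{≤1}(𝔛_p) = H^{2n}(𝔛_p). (Lemma: Bound on the filtrations, part (i).) -/

import Mathlib

/-!
Above degree one every graded piece of either filtration is a direct sum of groups that vanish
for degree reasons: intersection cohomology in negative degree, respectively a stalk of
`𝓗^m(IC)` with `m` below minus the dimension of the support. So both filtrations stop growing
after index `1`, and being exhaustive they already exhaust everything at index `1`.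
-/

open DirectSum

theorem Int.le_of_forall_lt_le_sub_one {α : Type*} [Preorder α] {F : ℤ → α} {a : ℤ}
    (hstep : ∀ i, a < i → F i ≤ F (i - 1)) {i : ℤ} (hi : a ≤ i) : F i ≤ F a := by
  induction i, hi using Int.leInduction with
  | base => exact le_rfl
  | succ k hk ih => exact (hstep (k + 1) (by omega)).trans (by rwa [add_sub_cancel_right])

namespace Submodule

variable {R M : Type*} [Ring R] [AddCommGroup M] [Module R M]

theorem eq_top_of_subsingleton_gradedPiece {F : ℤ → Submodule R M} (hmono : Monotone F)
    (hexh : ∀ x : M, ∃ i, x ∈ F i) {a : ℤ}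
    (hgr : ∀ i, a < i → Subsingleton (↥(F i) ⧸ comap (F i).subtype (F (i - 1)))) :
    F a = ⊤ := by
  have hstep : ∀ i, a < i → F i ≤ F (i - 1) := fun i hi =>
    comap_subtype_eq_top.mp (Quotient.subsingleton_iff.mp (hgr i hi))
  refine eq_top_iff'.mpr fun x => ?_
  obtain ⟨i, hx⟩ := hexh x
  rcases le_total i a with hia | hai
  · exact hmono hia hx
  · exact Int.le_of_forall_lt_le_sub_one hstep hai hx

end Submodule

theorem perverse_filtration_bounded_by_one_general
    (d : ℕ)
    -- `H^{2n}(𝔛)`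
    (Hfam : Type*) [AddCommGroup Hfam] [Module ℚ Hfam]
    -- the perverse filtration `H^{2n}_{≤ i}(𝔛)`: increasing and exhaustive
    (F : ℤ → Submodule ℚ Hfam) (hFmono : Monotone F)
    (hFexh : ∀ x : Hfam, ∃ i : ℤ, x ∈ F i)
    -- intersection cohomology groups `IH i j k = IH^k(closure S_{d-j}, L_{ij})`
    (IH : ℤ → ℕ → ℤ → Type*)
    [∀ i j k, AddCommGroup (IH i j k)] [∀ i j k, Module ℚ (IH i j k)]
    -- vanishing of intersection cohomology in negative degrees
    (hIHvan : ∀ i j k, k < 0 → Subsingleton (IH i j k))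
    -- Decomposition Theorem: description of the graded pieces `H^{2n}_i(𝔛)`
    (hgr : ∀ i : ℤ,
      Nonempty ((↥(F i) ⧸ Submodule.comap (F i).subtype (F (i - 1))) ≃ₗ[ℚ]
        ⨁ j : ℕ, IH i j (-(j : ℤ) - (i - 1))))
    -- points `p ∈ ℙ^d`, stalks `H^{2n}(𝔛_p)` with the induced filtration
    (P : Type*) (Hp : P → Type*)
    [∀ p, AddCommGroup (Hp p)] [∀ p, Module ℚ (Hp p)]
    (Fp : ∀ p, ℤ → Submodule ℚ (Hp p)) (hFpmono : ∀ p, Monotone (Fp p))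
    (hFpexh : ∀ p (x : Hp p), ∃ i : ℤ, x ∈ Fp p i)
    -- stalks `HIC p i j m = 𝓗^m(IC(L_{ij}))_p` of the cohomology sheaves
    (HIC : P → ℤ → ℕ → ℤ → Type*)
    [∀ p i j m, AddCommGroup (HIC p i j m)] [∀ p i j m, Module ℚ (HIC p i j m)]
    -- support condition: `𝓗^m(IC_Z(L)) = 0` for `m < -dim Z`
    (hICvan : ∀ p (i : ℤ) (j : ℕ) (m : ℤ), m < -((d : ℤ) - (j : ℤ)) → Subsingleton (HIC p i j m))
    -- Decomposition Theorem: description of the graded pieces `H^{2n}_i(𝔛_p)`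
    (hgrp : ∀ p (i : ℤ),
      Nonempty ((↥(Fp p i) ⧸ Submodule.comap (Fp p i).subtype (Fp p (i - 1))) ≃ₗ[ℚ]
        ⨁ j : ℕ, HIC p i j (-(d : ℤ) + 1 - i))) :
    F 1 = ⊤ ∧ ∀ p, Fp p 1 = ⊤ := by
  constructor
  · refine Submodule.eq_top_of_subsingleton_gradedPiece hFmono hFexh fun i hi => ?_
    have := fun j : ℕ => hIHvan i j (-(j : ℤ) - (i - 1)) (by omega)
    exact (hgr i).some.toEquiv.subsingleton
  · intro p
    refine Submodule.eq_top_of_subsingleton_gradedPiece (hFpmono p) (hFpexh p) fun i hi => ?_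
    have := fun j : ℕ => hICvan p i j (-(d : ℤ) + 1 - i) (by omega)
    exact (hgrp p i).some.toEquiv.subsingleton

/-- **Lemma (Bound on the filtrations, part (i)).**
Let `X ⊆ ℙ^d` be a smooth complex projective variety of even dimension `2n`
with universal hyperplane family `π : 𝔛 → ℙ^d` (all cohomology with `ℚ`
coefficients).  The Decomposition Theorem gives
`Rπ_*ℚ ≅ ⊕_{i,j} IC(L_{ij})[−i−(2n−1+d)]`, inducing the perverse filtration
`H^{2n}_{≤i}(𝔛)` (abstracted below as the increasing exhaustive filtration `F`
on the `ℚ`-vector space `Hfam = H^{2n}(𝔛)`), whose graded pieces are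
canonically `H^{2n}_i(𝔛) = ⊕_{j∈ℕ} IH^{−j−(i−1)}(closure S_{d−j}, L_{ij})`
(hypothesis `hgr`, with `IH i j k` the intersection cohomology group
`IH^k(closure S_{d−j}, L_{ij})`, which vanishes in negative degrees `k < 0`,
hypothesis `hIHvan`).  Likewise, for every point `p ∈ ℙ^d` (abstracted as
`p : P`), the induced filtration `Fp p` on the stalk
`Hp p = H^{2n}(𝔛_p) = (R^{2n}π_*ℚ)_p` has graded pieces
`H^{2n}_i(𝔛_p) = ⊕_{j∈ℕ} 𝓗^{−(d−j)−j−(i−1)}(IC(L_{ij}))_p`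
(hypothesis `hgrp`, with `HIC p i j m` the stalk at `p` of the cohomology
sheaf `𝓗^m(IC(L_{ij}))`, which vanishes for `m < −dim(closure S_{d−j}) = −(d−j)`,
hypothesis `hICvan`, by the normalization of intersection complexes).

Conclusion: `H^{2n}_{≤1}(𝔛) = H^{2n}(𝔛)` and `H^{2n}_{≤1}(𝔛_p) = H^{2n}(𝔛_p)`
for every `p`. -/
theorem perverse_filtration_bounded_by_one
    (d n : ℕ) (hd : 0 < d) (hn : 0 < n)
    -- `H^{2n}(𝔛)`
    (Hfam : Type*) [AddCommGroup Hfam] [Module ℚ Hfam]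
    -- the perverse filtration `H^{2n}_{≤ i}(𝔛)`: increasing and exhaustive
    (F : ℤ → Submodule ℚ Hfam) (hFmono : Monotone F)
    (hFexh : ∀ x : Hfam, ∃ i : ℤ, x ∈ F i)
    -- intersection cohomology groups `IH i j k = IH^k(closure S_{d-j}, L_{ij})`
    (IH : ℤ → ℕ → ℤ → Type*)
    [∀ i j k, AddCommGroup (IH i j k)] [∀ i j k, Module ℚ (IH i j k)]
    -- vanishing of intersection cohomology in negative degrees
    (hIHvan : ∀ i j k, k < 0 → Subsingleton (IH i j k))
    -- Decomposition Theorem: description of the graded pieces `H^{2n}_i(𝔛)`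
    (hgr : ∀ i : ℤ,
      Nonempty ((↥(F i) ⧸ Submodule.comap (F i).subtype (F (i - 1))) ≃ₗ[ℚ]
        ⨁ j : ℕ, IH i j (-(j : ℤ) - (i - 1))))
    -- points `p ∈ ℙ^d`, stalks `H^{2n}(𝔛_p)` with the induced filtration
    (P : Type*) (Hp : P → Type*)
    [∀ p, AddCommGroup (Hp p)] [∀ p, Module ℚ (Hp p)]
    (Fp : ∀ p, ℤ → Submodule ℚ (Hp p)) (hFpmono : ∀ p, Monotone (Fp p))
    (hFpexh : ∀ p (x : Hp p), ∃ i : ℤ, x ∈ Fp p i)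
    -- stalks `HIC p i j m = 𝓗^m(IC(L_{ij}))_p` of the cohomology sheaves
    (HIC : P → ℤ → ℕ → ℤ → Type*)
    [∀ p i j m, AddCommGroup (HIC p i j m)] [∀ p i j m, Module ℚ (HIC p i j m)]
    -- support condition: `𝓗^m(IC_Z(L)) = 0` for `m < -dim Z`
    (hICvan : ∀ p (i : ℤ) (j : ℕ) (m : ℤ), m < -((d : ℤ) - (j : ℤ)) → Subsingleton (HIC p i j m))
    -- Decomposition Theorem: description of the graded pieces `H^{2n}_i(𝔛_p)`
    (hgrp : ∀ p (i : ℤ),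
      Nonempty ((↥(Fp p i) ⧸ Submodule.comap (Fp p i).subtype (Fp p (i - 1))) ≃ₗ[ℚ]
        ⨁ j : ℕ, HIC p i j (-(d : ℤ) + 1 - i))) :
    F 1 = ⊤ ∧ ∀ p, Fp p 1 = ⊤ :=
  perverse_filtration_bounded_by_one_general d Hfam F hFmono hFexh IH hIHvan hgr P Hp Fp hFpmono
    hFpexh HIC hICvan hgrp
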